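/- Let (V, μ, α) be a multiplicative Hom-Jordan algebra over a field F. If D₁ is an α^k-derivation of V and D₂ lies in the α^s-centroid C_{α^s}(V) (k, s ≥ 0), then the commutator [D₁, D₂] = D₁ ∘ D₂ − D₂ ∘ D₁ lies in the α^(k+s)-centroid C_{α^(k+s)}(V). -/
import Mathlib


/-- `D` is an `α^k`-derivation of the Hom-Jordan algebra `(V, μ, α)`. -/
def IsDer {F V : Type*} [Field F] [AddCommGroup V] [Module F V]
    (μ : V →ₗ[F] V →ₗ[F] V) (α : V →ₗ[F] V) (k : ℕ) (D : V →ₗ[F] V) : Prop :=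
  D ∘ₗ α = α ∘ₗ D ∧
    ∀ x y : V, D (μ x y) = μ (D x) ((α ^ k) y) + μ ((α ^ k) x) (D y)

/-- `D` lies in the `α^k`-centroid of the Hom-Jordan algebra `(V, μ, α)`. -/
def InCentroid {F V : Type*} [Field F] [AddCommGroup V] [Module F V]
    (μ : V →ₗ[F] V →ₗ[F] V) (α : V →ₗ[F] V) (k : ℕ) (D : V →ₗ[F] V) : Prop :=
  D ∘ₗ α = α ∘ₗ D ∧ ∀ x y : V,
    μ (D x) ((α ^ k) y) = D (μ x y) ∧ μ ((α ^ k) x) (D y) = D (μ x y)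

theorem stmt4 {F V : Type*} [Field F] [AddCommGroup V] [Module F V]
    (μ : V →ₗ[F] V →ₗ[F] V) (α : V →ₗ[F] V)
    (hcomm : ∀ x y : V, μ x y = μ y x)
    (hJ : ∀ x y : V, μ (α (α x)) (μ y (μ x x)) = μ (μ (α x) y) (α (μ x x)))
    (hmult : ∀ x y : V, α (μ x y) = μ (α x) (α y))
    (k s : ℕ) (D₁ D₂ : V →ₗ[F] V)
    (h₁ : IsDer μ α k D₁) (h₂ : InCentroid μ α s D₂) :
    InCentroid μ α (k + s) (D₁ ∘ₗ D₂ - D₂ ∘ₗ D₁) := by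
  obtain ⟨hc1, hd1⟩ := h₁
  obtain ⟨hc2, hd2⟩ := h₂
  have c1 : Commute D₁ α := hc1
  have c2 : Commute D₂ α := hc2
  have p1 : ∀ (n : ℕ) (x : V), D₁ ((α ^ n) x) = (α ^ n) (D₁ x) := fun n x =>
    LinearMap.congr_fun (c1.pow_right n) x
  have p2 : ∀ (n : ℕ) (x : V), D₂ ((α ^ n) x) = (α ^ n) (D₂ x) := fun n x =>
    LinearMap.congr_fun (c2.pow_right n) x
  have hpow : ∀ x : V, (α ^ (k + s)) x = (α ^ k) ((α ^ s) x) := fun x => by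
    rw [pow_add]; rfl
  have hpow' : ∀ x : V, (α ^ (k + s)) x = (α ^ s) ((α ^ k) x) := fun x => by
    rw [add_comm, pow_add]; rfl
  constructor
  · ext x
    simp only [LinearMap.sub_comp, LinearMap.comp_sub, LinearMap.sub_apply,
      LinearMap.comp_apply]
    rw [show D₂ (α x) = α (D₂ x) from LinearMap.congr_fun hc2 x,
      show D₁ (α x) = α (D₁ x) from LinearMap.congr_fun hc1 x,
      show D₁ (α (D₂ x)) = α (D₁ (D₂ x)) from LinearMap.congr_fun hc1 (D₂ x),
      show D₂ (α (D₁ x)) = α (D₂ (D₁ x)) from LinearMap.congr_fun hc2 (D₁ x)]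
  · intro x y
    have e1 : D₁ (D₂ (μ x y))
        = μ (D₁ (D₂ x)) ((α ^ (k + s)) y) + μ ((α ^ k) (D₂ x)) (D₁ ((α ^ s) y)) := by
      rw [← (hd2 x y).1, hd1, hpow]
    have e2 : D₂ (D₁ (μ x y))
        = μ (D₂ (D₁ x)) ((α ^ (k + s)) y) + μ ((α ^ s) ((α ^ k) x)) (D₂ (D₁ y)) := by
      rw [hd1 x y, map_add, ← (hd2 (D₁ x) ((α ^ k) y)).1,
        ← (hd2 ((α ^ k) x) (D₁ y)).2, hpow']
    have e3 : μ ((α ^ k) (D₂ x)) (D₁ ((α ^ s) y))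
        = μ ((α ^ s) ((α ^ k) x)) (D₂ (D₁ y)) := by
      rw [← p2 k x, p1 s y, (hd2 ((α ^ k) x) (D₁ y)).1]
      exact ((hd2 ((α ^ k) x) (D₁ y)).2).symm
    have f1 : D₁ (D₂ (μ x y))
        = μ (D₁ ((α ^ s) x)) ((α ^ k) (D₂ y)) + μ ((α ^ (k + s)) x) (D₁ (D₂ y)) := by
      rw [← (hd2 x y).2, hd1, hpow]
    have f2 : D₂ (D₁ (μ x y))
        = μ ((α ^ s) (D₁ x)) (D₂ ((α ^ k) y)) + μ ((α ^ (k + s)) x) (D₂ (D₁ y)) := by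
      rw [hd1 x y, map_add, ← (hd2 (D₁ x) ((α ^ k) y)).2,
        ← (hd2 ((α ^ k) x) (D₁ y)).2, hpow']
    have f3 : μ (D₁ ((α ^ s) x)) ((α ^ k) (D₂ y))
        = μ ((α ^ s) (D₁ x)) (D₂ ((α ^ k) y)) := by
      rw [p1 s x, p2 k y]
    constructor
    · simp only [LinearMap.sub_apply, LinearMap.comp_apply, map_sub,
        LinearMap.sub_apply]
      rw [e1, e2, e3]
      abel
    · simp only [LinearMap.sub_apply, LinearMap.comp_apply, map_sub]
      rw [f1, f2, f3]
      abel
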